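/- arXiv:1708.06545 — 2 statements merged into one kernel-verified Lean document; each statement's English description precedes it below -/
import Mathlib

section
/- Let B be an n×n matrix over ℂ (n ≥ 2) and let λ₁, …, λₙ be the roots of the characteristic polynomial of B, listed with multiplicity. Then the following are equivalent: (i) B is invertible and there exist distinct indices i ≠ j with λᵢ + λⱼ = 0; (ii) det(B) ≠ 0 and the restriction of the Lie derivative L_B to the space S₂ of homogeneous degree-2 polynomials in ℂ[x₁,…,xₙ] is not injective (equivalently, the constant coefficient of the characteristic polynomial of L_B restricted to S₂ is zero). -/
/-!
If `Bᵀ u = μ u` and `Bᵀ v = ν v`, then, as `L_B` is a derivation with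
`L_B ⟨u, x⟩ = ⟨Bᵀ u, x⟩`, the quadratic form `⟨u, x⟩ ⟨v, x⟩` is an eigenvector of `L_B` with
eigenvalue `μ + ν`. Conversely, the Hessian `H` of a quadratic form `ψ` transforms as
`H (L_B ψ) = H B + Bᵀ H`, so `L_B ψ = 0` is the Sylvester equation `Bᵀ H = H (-B)`. A nonzero
solution forces `Bᵀ` and `-B` to share an eigenvalue `μ`, so `μ` and `-μ` are both eigenvalues
of `B`; they differ because `B` is invertible, hence sit at distinct indices.
-/

open MvPolynomial

/-- The Lie derivative of a polynomial `ψ` along the linear vector field `x ↦ Bx`. -/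
noncomputable def lieDeriv {K : Type*} [CommRing K] {n : ℕ} (B : Matrix (Fin n) (Fin n) K)
    (ψ : MvPolynomial (Fin n) K) : MvPolynomial (Fin n) K :=
  ∑ i, pderiv i ψ * ∑ j, C (B i j) * X j

open scoped Matrix

namespace MvPolynomial

variable {R σ : Type*} [CommRing R]

theorem pderiv_pderiv_comm (i j : σ) (φ : MvPolynomial σ R) :
    pderiv i (pderiv j φ) = pderiv j (pderiv i φ) := by
  classical
  -- the commutator of two derivations is a derivation, and this one kills every variable
  have h : ⁅pderiv i, pderiv j⁆ = (0 : Derivation R (MvPolynomial σ R) (MvPolynomial σ R)) :=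
    derivation_ext fun k => by
      rw [Derivation.commutator_apply]
      simp [pderiv_X, Pi.single_apply, apply_ite (pderiv _)]
  simpa only [Derivation.commutator_apply, Derivation.zero_apply, sub_eq_zero] using congr($h φ)

theorem IsHomogeneous.eq_C_constantCoeff {φ : MvPolynomial σ R} (hφ : φ.IsHomogeneous 0) :
    φ = C (constantCoeff φ) := by
  rw [constantCoeff_eq]
  exact totalDegree_eq_zero_iff_eq_C.mp ((totalDegree_zero_iff_isHomogeneous σ).mpr hφ)

theorem IsHomogeneous.eq_zero_of_forall_pderiv_eq_zero [Fintype σ] [IsDomain R] [CharZero R]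
    {φ : MvPolynomial σ R} {m : ℕ} (hφ : φ.IsHomogeneous m) (hm : m ≠ 0)
    (h : ∀ i, pderiv i φ = 0) : φ = 0 := by
  have euler := hφ.sum_X_mul_pderiv
  simp only [h, mul_zero, Finset.sum_const_zero] at euler
  exact (smul_eq_zero.mp euler.symm).resolve_left hm

noncomputable def hessianAtZero (ψ : MvPolynomial σ R) : Matrix σ σ R :=
  Matrix.of fun k l => constantCoeff (pderiv l (pderiv k ψ))

theorem hessianAtZero_apply (ψ : MvPolynomial σ R) (k l : σ) :
    hessianAtZero ψ k l = constantCoeff (pderiv l (pderiv k ψ)) := rfl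

@[simp]
theorem hessianAtZero_zero : hessianAtZero (0 : MvPolynomial σ R) = 0 := by
  ext
  simp [hessianAtZero_apply]

theorem IsHomogeneous.eq_zero_of_hessianAtZero_eq_zero [Fintype σ] [IsDomain R] [CharZero R]
    {ψ : MvPolynomial σ R} (hψ : ψ.IsHomogeneous 2) (hH : hessianAtZero ψ = 0) : ψ = 0 := by
  refine hψ.eq_zero_of_forall_pderiv_eq_zero two_ne_zero fun k => ?_
  refine hψ.pderiv.eq_zero_of_forall_pderiv_eq_zero one_ne_zero fun l => ?_
  rw [(hψ.pderiv.pderiv : (pderiv l (pderiv k ψ)).IsHomogeneous 0).eq_C_constantCoeff,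
    ← hessianAtZero_apply, hH, Matrix.zero_apply, map_zero]

variable [Fintype σ]

noncomputable def linearForm (u : σ → R) : MvPolynomial σ R :=
  ∑ k, C (u k) * X k

@[simp]
theorem pderiv_linearForm (u : σ → R) (i : σ) :
    pderiv i (linearForm u) = C (u i) := by
  classical
  simp [linearForm, pderiv_X, Pi.single_apply]

@[simp]
theorem constantCoeff_linearForm (u : σ → R) : constantCoeff (linearForm u) = 0 := by
  simp [linearForm]

theorem isHomogeneous_linearForm (u : σ → R) : (linearForm u).IsHomogeneous 1 :=
  IsHomogeneous.sum _ _ _ fun _ _ => isHomogeneous_C_mul_X _ _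

theorem linearForm_ne_zero {u : σ → R} (hu : u ≠ 0) : linearForm u ≠ 0 := by
  classical
  obtain ⟨k, hk⟩ := Function.ne_iff.mp hu
  intro h
  have h' := congr(pderiv k $h)
  rw [pderiv_linearForm, map_zero, C_eq_zero] at h'
  exact hk h'

theorem linearForm_smul (c : R) (u : σ → R) : linearForm (c • u) = C c * linearForm u := by
  simp only [linearForm, Finset.mul_sum, Pi.smul_apply, smul_eq_mul, map_mul, mul_assoc]

end MvPolynomial

theorem SemiconjBy.aeval {R A : Type*} [CommSemiring R] [Semiring A] [Algebra R A] {s a b : A}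
    (h : SemiconjBy s a b) (p : Polynomial R) :
    SemiconjBy s (Polynomial.aeval a p) (Polynomial.aeval b p) := by
  induction p using Polynomial.induction_on' with
  | add p q hp hq => simpa only [map_add] using hp.add_right hq
  | monomial k r =>
    simp only [Polynomial.aeval_monomial]
    exact SemiconjBy.mul_right (Algebra.commute_algebraMap_right r s) (h.pow_right k)

namespace Matrix

variable {ι K : Type*} [Fintype ι] [DecidableEq ι] [Field K]

theorem spectrum_transpose (A : Matrix ι ι K) : spectrum K Aᵀ = spectrum K A := by
  ext μ
  rw [mem_spectrum_iff_isRoot_charpoly, mem_spectrum_iff_isRoot_charpoly, charpoly_transpose]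

theorem exists_mulVec_eq_smul_of_mem_spectrum {A : Matrix ι ι K} {μ : K}
    (hμ : μ ∈ spectrum K A) :
    ∃ v ≠ 0, A *ᵥ v = μ • v := by
  rw [← spectrum_toLin', ← Module.End.hasEigenvalue_iff_mem_spectrum] at hμ
  obtain ⟨v, hv⟩ := hμ.exists_hasEigenvector
  exact ⟨v, hv.2, by simpa using hv.apply_eq_smul⟩

theorem exists_mem_spectrum_of_mul_eq_mul [IsAlgClosed K] {A S C : Matrix ι ι K} (hS : S ≠ 0)
    (h : A * S = S * C) : ∃ μ ∈ spectrum K A, μ ∈ spectrum K C := by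
  obtain hι | hι := isEmpty_or_nonempty ι
  · exact absurd (Matrix.ext fun i => isEmptyElim i) hS
  -- `S χ_A(C) = χ_A(A) S = 0`, so `χ_A(C)` is singular; conclude by spectral mapping
  have hp : S * Polynomial.aeval C A.charpoly = 0 := by
    rw [(SemiconjBy.aeval h.symm A.charpoly).eq, aeval_self_charpoly, zero_mul]
  have hdeg : 0 < A.charpoly.degree := by
    rw [charpoly_degree_eq_dim]; exact_mod_cast Fintype.card_pos
  have h0 : (0 : K) ∈ spectrum K (Polynomial.aeval C A.charpoly) :=
    (spectrum.zero_mem_iff K).mpr fun hu => hS (hu.mul_left_eq_zero.mp hp)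
  rw [spectrum.map_polynomial_aeval_of_degree_pos C _ hdeg] at h0
  obtain ⟨μ, hμ, hroot⟩ := h0
  exact ⟨μ, mem_spectrum_iff_isRoot_charpoly.mpr hroot, hμ⟩

theorem mem_spectrum_iff_of_charpoly_eq_prod {κ : Type*} [Fintype κ] {A : Matrix ι ι K}
    {lam : κ → K}
    (h : A.charpoly = ∏ i, (Polynomial.X - Polynomial.C (lam i))) {μ : K} :
    μ ∈ spectrum K A ↔ ∃ i, lam i = μ := by
  rw [mem_spectrum_iff_isRoot_charpoly, h, Polynomial.IsRoot.def, Polynomial.eval_prod,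
    Finset.prod_eq_zero_iff]
  simp [sub_eq_zero, eq_comm]

end Matrix

section LieDerivative

variable {R : Type*} [CommRing R] {n : ℕ} (B : Matrix (Fin n) (Fin n) R)

theorem lieDeriv_eq_sum_pderiv_mul_linearForm (ψ : MvPolynomial (Fin n) R) :
    lieDeriv B ψ = ∑ i, pderiv i ψ * linearForm (B i) := rfl

theorem lieDeriv_mul (f g : MvPolynomial (Fin n) R) :
    lieDeriv B (f * g) = lieDeriv B f * g + f * lieDeriv B g := by
  simp only [lieDeriv_eq_sum_pderiv_mul_linearForm, pderiv_mul, add_mul, Finset.sum_add_distrib,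
    Finset.sum_mul, Finset.mul_sum]
  congr 1 <;> exact Finset.sum_congr rfl fun i _ => by ring

theorem lieDeriv_linearForm (u : Fin n → R) :
    lieDeriv B (linearForm u) = linearForm (Bᵀ *ᵥ u) := by
  simp only [lieDeriv_eq_sum_pderiv_mul_linearForm, pderiv_linearForm]
  simp only [linearForm, Finset.mul_sum, Matrix.mulVec, dotProduct, Matrix.transpose_apply,
    map_sum, Finset.sum_mul]
  rw [Finset.sum_comm]
  exact Finset.sum_congr rfl fun j _ => Finset.sum_congr rfl fun i _ => by rw [map_mul]; ring

theorem lieDeriv_linearForm_mul_linearForm {u v : Fin n → R} {μ ν : R}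
    (hu : Bᵀ *ᵥ u = μ • u) (hv : Bᵀ *ᵥ v = ν • v) :
    lieDeriv B (linearForm u * linearForm v) = C (μ + ν) * (linearForm u * linearForm v) := by
  rw [lieDeriv_mul, lieDeriv_linearForm, lieDeriv_linearForm, hu, hv, linearForm_smul,
    linearForm_smul, map_add]
  ring

theorem hessianAtZero_lieDeriv (ψ : MvPolynomial (Fin n) R) :
    hessianAtZero (lieDeriv B ψ) = hessianAtZero ψ * B + Bᵀ * hessianAtZero ψ := by
  ext k l
  rw [Matrix.add_apply, Matrix.mul_apply, Matrix.mul_apply, ← Finset.sum_add_distrib]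
  simp only [hessianAtZero_apply, lieDeriv_eq_sum_pderiv_mul_linearForm, map_sum, pderiv_mul,
    map_add, map_mul, pderiv_linearForm, constantCoeff_linearForm, constantCoeff_C,
    Matrix.transpose_apply, mul_zero, zero_add, add_zero, pderiv_C]
  refine Finset.sum_congr rfl fun i _ => ?_
  rw [pderiv_pderiv_comm k i]
  ring

end LieDerivative

section LieDerivativeKernel

open Matrix

variable {K : Type*} [Field K] {n : ℕ} {B : Matrix (Fin n) (Fin n) K}

theorem exists_lieDeriv_eq_zero_of_mem_spectrum {μ ν : K} (hμ : μ ∈ spectrum K B)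
    (hν : ν ∈ spectrum K B) (hμν : μ + ν = 0) :
    ∃ ψ : MvPolynomial (Fin n) K, ψ.IsHomogeneous 2 ∧ ψ ≠ 0 ∧ lieDeriv B ψ = 0 := by
  rw [← spectrum_transpose] at hμ hν
  obtain ⟨u, hu0, hu⟩ := exists_mulVec_eq_smul_of_mem_spectrum hμ
  obtain ⟨v, hv0, hv⟩ := exists_mulVec_eq_smul_of_mem_spectrum hν
  refine ⟨linearForm u * linearForm v,
    (isHomogeneous_linearForm u).mul (isHomogeneous_linearForm v),
    mul_ne_zero (linearForm_ne_zero hu0) (linearForm_ne_zero hv0), ?_⟩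
  rw [lieDeriv_linearForm_mul_linearForm B hu hv, hμν, map_zero, zero_mul]

theorem exists_neg_mem_spectrum_of_lieDeriv_eq_zero [IsAlgClosed K] [CharZero K]
    {ψ : MvPolynomial (Fin n) K} (hψ : ψ.IsHomogeneous 2) (hψ0 : ψ ≠ 0)
    (hL : lieDeriv B ψ = 0) : ∃ μ ∈ spectrum K B, -μ ∈ spectrum K B := by
  have hH : hessianAtZero ψ ≠ 0 := fun h => hψ0 (hψ.eq_zero_of_hessianAtZero_eq_zero h)
  have hsylvester : Bᵀ * hessianAtZero ψ = hessianAtZero ψ * -B := by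
    have h := hessianAtZero_lieDeriv B ψ
    rw [hL, hessianAtZero_zero] at h
    rw [mul_neg, eq_neg_iff_add_eq_zero, add_comm, ← h]
  obtain ⟨μ, hμ, hμ'⟩ := exists_mem_spectrum_of_mul_eq_mul hH hsylvester
  rw [spectrum_transpose] at hμ
  rw [← spectrum.neg_eq, Set.mem_neg] at hμ'
  exact ⟨μ, hμ, hμ'⟩

end LieDerivativeKernel

theorem invertible_and_eigenpair_iff_lieDeriv_not_injective_general {n : ℕ}
    (B : Matrix (Fin n) (Fin n) ℂ) (lam : Fin n → ℂ)
    (hroots : B.charpoly = ∏ i, (Polynomial.X - Polynomial.C (lam i))) :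
    (IsUnit B ∧ ∃ i j : Fin n, i ≠ j ∧ lam i + lam j = 0) ↔
      (B.det ≠ 0 ∧ ∃ ψ : MvPolynomial (Fin n) ℂ,
        ψ.IsHomogeneous 2 ∧ ψ ≠ 0 ∧ lieDeriv B ψ = 0) := by
  have hspec (μ : ℂ) : μ ∈ spectrum ℂ B ↔ ∃ i, lam i = μ :=
    Matrix.mem_spectrum_iff_of_charpoly_eq_prod hroots
  rw [← isUnit_iff_ne_zero, ← Matrix.isUnit_iff_isUnit_det]
  refine and_congr_right fun hB => ⟨?_, ?_⟩
  · rintro ⟨i, j, -, hij⟩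
    exact exists_lieDeriv_eq_zero_of_mem_spectrum ((hspec _).2 ⟨i, rfl⟩) ((hspec _).2 ⟨j, rfl⟩)
      hij
  · rintro ⟨ψ, hψ, hψ0, hL⟩
    obtain ⟨μ, hμ, hμ'⟩ := exists_neg_mem_spectrum_of_lieDeriv_eq_zero hψ hψ0 hL
    obtain ⟨i, rfl⟩ := (hspec _).1 hμ
    obtain ⟨j, hj⟩ := (hspec _).1 hμ'
    have hi : lam i ≠ 0 := fun h => (spectrum.zero_mem_iff ℂ).mp (h ▸ hμ) hB
    refine ⟨j, i, fun hji => hi ?_, by rw [hj, neg_add_cancel]⟩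
    rw [hji] at hj
    linear_combination hj / 2

/-- Let `λ₁, …, λₙ` be the roots (with multiplicity) of the characteristic polynomial of
`B : Matrix (Fin n) (Fin n) ℂ` (`n ≥ 2`). Then `B` is invertible and admits a pair of
eigenvalues (at distinct indices) adding up to zero if and only if `det B ≠ 0` and the
restriction of `L_B` to the homogeneous degree-2 polynomials is not injective (i.e. some
nonzero homogeneous degree-2 polynomial is annihilated by `L_B`). -/
theorem invertible_and_eigenpair_iff_lieDeriv_not_injective {n : ℕ} (hn : 2 ≤ n)
    (B : Matrix (Fin n) (Fin n) ℂ) (lam : Fin n → ℂ)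
    (hroots : B.charpoly = ∏ i, (Polynomial.X - Polynomial.C (lam i))) :
    (IsUnit B ∧ ∃ i j : Fin n, i ≠ j ∧ lam i + lam j = 0) ↔
      (B.det ≠ 0 ∧ ∃ ψ : MvPolynomial (Fin n) ℂ,
        ψ.IsHomogeneous 2 ∧ ψ ≠ 0 ∧ lieDeriv B ψ = 0) :=
  invertible_and_eigenpair_iff_lieDeriv_not_injective_general B lam hroots
end

section
/- Let q ∈ ℝ[X] be a monic polynomial of degree n − 2 (n ≥ 2), let b ∈ ℝ, and set χ := q · (X² + b) ∈ ℝ[X]. Then the following are equivalent: (i) every complex root of χ has real part ≤ 0, χ(0) ≠ 0, and the roots of χ with real part equal to 0 are exactly one conjugate pair of simple, nonzero, purely imaginary roots; (ii) b > 0 and every complex root of q has real part < 0. -/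
/-!
Over `ℂ`, `X² + ω² = (X - iω)(X + iω)`, so the roots of `q · (X² + ω²)` are those of `q` together
with `±iω`, and its multiplicity at `±iω` exceeds that of `q` by one. Hence the purely imaginary
roots form one simple pair exactly when `q` has none. The case `b ≤ 0` is excluded: `b < 0` gives
the positive real root `√(-b)`, and `b = 0` gives `χ(0) = 0`.
-/

open Polynomial Complex

theorem map_X_sq_add_C_sq (ω : ℝ) :
    (X ^ 2 + C (ω ^ 2) : ℝ[X]).map (algebraMap ℝ ℂ) = (X - C (I * ω)) * (X - C (-(I * ω))) := by
  have hI : C (I * ω) * C (I * ω) = -C ((ω : ℂ) ^ 2) := by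
    rw [← C_mul, ← C_neg]
    congr 1
    linear_combination (ω : ℂ) ^ 2 * I_sq
  simp only [Polynomial.map_add, Polynomial.map_pow, map_X, map_C, Complex.coe_algebraMap,
    ofReal_pow, map_neg]
  linear_combination hI

theorem aeval_mul_X_sq_add_C_sq_eq_zero_iff (q : ℝ[X]) (ω : ℝ) (z : ℂ) :
    aeval z (q * (X ^ 2 + C (ω ^ 2))) = 0 ↔ aeval z q = 0 ∨ z = I * ω ∨ z = -(I * ω) := by
  rw [map_mul, mul_eq_zero, ← eval_map_algebraMap (X ^ 2 + C (ω ^ 2)), map_X_sq_add_C_sq,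
    eval_mul, mul_eq_zero]
  simp only [eval_sub, eval_X, eval_C, sub_eq_zero]

theorem rootMultiplicity_mul_X_sub_C_mul_X_sub_C {K : Type*} [Field K] {p : K[X]} (hp : p ≠ 0)
    {a c : K} (hac : a ≠ c) :
    (p * ((X - C a) * (X - C c))).rootMultiplicity a = p.rootMultiplicity a + 1 := by
  rw [rootMultiplicity_mul (mul_ne_zero hp (mul_ne_zero (X_sub_C_ne_zero a) (X_sub_C_ne_zero c))),
    rootMultiplicity_mul (mul_ne_zero (X_sub_C_ne_zero a) (X_sub_C_ne_zero c)),
    rootMultiplicity_X_sub_C_self,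
    rootMultiplicity_eq_zero (p := X - C c) (by simpa [sub_eq_zero] using hac)]

theorem rootMultiplicity_map_mul_X_sq_add_C_sq {q : ℝ[X]} (hq : q ≠ 0) {ω : ℝ} (hω : ω ≠ 0)
    {z : ℂ} (hz : z = I * ω ∨ z = -(I * ω)) :
    ((q * (X ^ 2 + C (ω ^ 2))).map (algebraMap ℝ ℂ)).rootMultiplicity z =
      (q.map (algebraMap ℝ ℂ)).rootMultiplicity z + 1 := by
  have hqℂ : q.map (algebraMap ℝ ℂ) ≠ 0 :=
    (Polynomial.map_ne_zero_iff (algebraMap ℝ ℂ).injective).2 hq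
  have hne : I * ω ≠ -(I * ω) := by simpa [eq_neg_iff_add_eq_zero, ← two_mul] using hω
  rw [Polynomial.map_mul, map_X_sq_add_C_sq]
  rcases hz with rfl | rfl
  · exact rootMultiplicity_mul_X_sub_C_mul_X_sub_C hqℂ hne
  · rw [mul_comm (X - C _)]
    exact rootMultiplicity_mul_X_sub_C_mul_X_sub_C hqℂ hne.symm

theorem pos_of_roots_X_sq_add_C_re_nonpos {b : ℝ} (hb : b ≠ 0)
    (h : ∀ z : ℂ, aeval z (X ^ 2 + C b : ℝ[X]) = 0 → z.re ≤ 0) : 0 < b := by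
  by_contra! hb'
  have hsq : √(-b) ^ 2 = -b := Real.sq_sqrt (neg_nonneg.2 hb')
  have hroot : aeval (√(-b) : ℂ) (X ^ 2 + C b : ℝ[X]) = 0 := by simp [← ofReal_pow, hsq]
  have hre := h _ hroot
  rw [ofReal_re] at hre
  exact hb (by nlinarith [Real.sqrt_nonneg (-b)])

theorem rootMultiplicity_map_mul_X_sq_add_C_sq_eq_one_iff {q : ℝ[X]} (hq : q ≠ 0) {ω : ℝ}
    (hω : ω ≠ 0) {z : ℂ} (hz : z = I * ω ∨ z = -(I * ω)) :
    ((q * (X ^ 2 + C (ω ^ 2))).map (algebraMap ℝ ℂ)).rootMultiplicity z = 1 ↔ aeval z q ≠ 0 := by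
  have hqℂ : q.map (algebraMap ℝ ℂ) ≠ 0 :=
    (Polynomial.map_ne_zero_iff (algebraMap ℝ ℂ).injective).2 hq
  rw [rootMultiplicity_map_mul_X_sq_add_C_sq hq hω hz, Nat.add_eq_right,
    rootMultiplicity_eq_zero_iff, IsRoot, eval_map_algebraMap]
  exact ⟨fun h hz => hqℂ (h hz), fun h hz => absurd hz h⟩

theorem eq_of_I_mul_eq_or_eq_neg {s ω : ℝ} (hs : 0 < s) (hω : 0 < ω)
    (h : I * s = I * ω ∨ I * s = -(I * ω)) : s = ω := by
  rcases h with h | h <;>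
  · have him := congrArg Complex.im h
    simp only [mul_im, I_re, I_im, ofReal_re, ofReal_im, neg_im] at him
    linarith

theorem roots_re_nonpos_with_imaginary_pair_iff_general (q : Polynomial ℝ) (b : ℝ)
    (χ : Polynomial ℝ) (hχ : χ = q * (X ^ 2 + Polynomial.C b)) :
    ((∀ z : ℂ, Polynomial.aeval z χ = 0 → z.re ≤ 0) ∧ χ.eval 0 ≠ 0 ∧
      ∃ ω : ℝ, 0 < ω ∧
        (∀ z : ℂ, (Polynomial.aeval z χ = 0 ∧ z.re = 0) ↔
          (z = Complex.I * ω ∨ z = -(Complex.I * ω))) ∧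
        (χ.map (algebraMap ℝ ℂ)).rootMultiplicity (Complex.I * ω) = 1 ∧
        (χ.map (algebraMap ℝ ℂ)).rootMultiplicity (-(Complex.I * ω)) = 1) ↔
    (0 < b ∧ ∀ z : ℂ, Polynomial.aeval z q = 0 → z.re < 0) := by
  subst hχ
  constructor
  · rintro ⟨hre, h0, ω, hω, himag, hm₁, hm₂⟩
    have hq : q ≠ 0 := by rintro rfl; simp at h0
    have hb : 0 < b := pos_of_roots_X_sq_add_C_re_nonpos (fun hb => h0 (by simp [hb]))
      fun z hz => hre z (by rw [map_mul, hz, mul_zero])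
    obtain ⟨s, hs, rfl⟩ : ∃ s : ℝ, 0 < s ∧ b = s ^ 2 :=
      ⟨√b, Real.sqrt_pos.2 hb, (Real.sq_sqrt hb.le).symm⟩
    obtain rfl : s = ω := eq_of_I_mul_eq_or_eq_neg hs hω <| (himag _).1
      ⟨(aeval_mul_X_sq_add_C_sq_eq_zero_iff q s (I * s)).2 (.inr (.inl rfl)), by simp⟩
    refine ⟨hb, fun z hz => ?_⟩
    have hzχ := (aeval_mul_X_sq_add_C_sq_eq_zero_iff q s z).2 (.inl hz)
    refine (hre z hzχ).lt_of_ne fun hz₀ => ?_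
    have hzs := (himag z).1 ⟨hzχ, hz₀⟩
    refine (rootMultiplicity_map_mul_X_sq_add_C_sq_eq_one_iff hq hs.ne' hzs).1 ?_ hz
    rcases hzs with rfl | rfl
    exacts [hm₁, hm₂]
  · rintro ⟨hb, hq⟩
    obtain ⟨ω, hω, rfl⟩ : ∃ ω : ℝ, 0 < ω ∧ b = ω ^ 2 :=
      ⟨√b, Real.sqrt_pos.2 hb, (Real.sq_sqrt hb.le).symm⟩
    have hq₀ : q.eval 0 ≠ 0 := fun h => by
      simpa using hq 0 (by simp [← coeff_zero_eq_aeval_zero', coeff_zero_eq_eval_zero, h])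
    have hsimple {z : ℂ} (hz : z = I * ω ∨ z = -(I * ω)) :
        ((q * (X ^ 2 + C (ω ^ 2))).map (algebraMap ℝ ℂ)).rootMultiplicity z = 1 :=
      (rootMultiplicity_map_mul_X_sq_add_C_sq_eq_one_iff (fun h => hq₀ (by simp [h])) hω.ne' hz).2
        fun h => (hq z h).ne (by rcases hz with rfl | rfl <;> simp)
    refine ⟨fun z hz => ?_, by simpa [hω.ne'] using hq₀, ω, hω, fun z => ?_,
      hsimple (.inl rfl), hsimple (.inr rfl)⟩
    · rcases (aeval_mul_X_sq_add_C_sq_eq_zero_iff q ω z).1 hz with h | rfl | rfl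
      exacts [(hq z h).le, by simp, by simp]
    · rw [aeval_mul_X_sq_add_C_sq_eq_zero_iff]
      constructor
      · rintro ⟨h | h, hre⟩
        exacts [absurd hre (hq z h).ne, h]
      · rintro (rfl | rfl) <;> simp

/-- Let `q` be a real monic polynomial of degree `n − 2` (`n ≥ 2`), `b ∈ ℝ`, and
`χ = q·(X² + b)`. Then: every complex root of `χ` has real part `≤ 0`, `χ(0) ≠ 0`, and the
roots of `χ` with real part `0` are exactly one conjugate pair of simple, nonzero, purely
imaginary roots, if and only if `b > 0` and every complex root of `q` has real part `< 0`. -/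
theorem roots_re_nonpos_with_imaginary_pair_iff {n : ℕ} (hn : 2 ≤ n) (q : Polynomial ℝ)
    (hq : q.Monic) (hdeg : q.natDegree = n - 2) (b : ℝ)
    (χ : Polynomial ℝ) (hχ : χ = q * (X ^ 2 + Polynomial.C b)) :
    ((∀ z : ℂ, Polynomial.aeval z χ = 0 → z.re ≤ 0) ∧ χ.eval 0 ≠ 0 ∧
      ∃ ω : ℝ, 0 < ω ∧
        (∀ z : ℂ, (Polynomial.aeval z χ = 0 ∧ z.re = 0) ↔
          (z = Complex.I * ω ∨ z = -(Complex.I * ω))) ∧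
        (χ.map (algebraMap ℝ ℂ)).rootMultiplicity (Complex.I * ω) = 1 ∧
        (χ.map (algebraMap ℝ ℂ)).rootMultiplicity (-(Complex.I * ω)) = 1) ↔
    (0 < b ∧ ∀ z : ℂ, Polynomial.aeval z q = 0 → z.re < 0) :=
  roots_re_nonpos_with_imaginary_pair_iff_general q b χ hχ
end
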